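/- arXiv:1110.1667 — 2 statements merged into one kernel-verified Lean document; each statement's English description precedes it below -/
import Mathlib

section
/- Let α, β, α', β' ∈ F and λ, λ' ∈ F* with Tr(αβ) = 1 and Tr(α'β') = 1, and suppose the conics C = {(0,x1,x2,x3) : α²x1² + x1x3 + β²x3² + λ²x2² = 0} and C' = {(0,x1,x2,x3) : α'²x1² + x1x3 + β'²x3² + λ'²x2² = 0} in the plane X0 = 0 of PG(3,q) are disjoint. Then the three conics K ∩ {λX0 + αX1 + (λ+1)X2 + βX3 = 0}, K ∩ {λ'X0 + α'X1 + (λ'+1)X2 + β'X3 = 0} and K ∩ {X0 + X2 = 0} are pairwise disjoint; hence the conic planes of a Mathon maximal arc together with the singular plane X0 + X2 = 0 define a partial flock of the cone K. -/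
/-!
STATEMENT 9: The conic planes of a Mathon maximal arc together with the singular
plane define a partial flock of the cone.  If the plane conics
`C : α²x1² + x1x3 + β²x3² + λ²x2² = 0` and `C' : α'²x1² + x1x3 + β'²x3² + λ'²x2² = 0`
(in `X0 = 0`, with `Tr(αβ) = Tr(α'β') = 1`) are disjoint, then the conics cut on
the cone `K` by the conic planes `λX0 + αX1 + (λ+1)X2 + βX3 = 0`,
`λ'X0 + α'X1 + (λ'+1)X2 + β'X3 = 0` and by the singular plane `X0 + X2 = 0`
are pairwise disjoint.
-/

open Projectivization

noncomputable section

abbrev F (h : ℕ) : Type := GaloisField 2 h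

/-- The absolute trace map from `GF(2^h)` onto `GF(2)`. -/
def Tr {h : ℕ} (x : F h) : ZMod 2 := Algebra.trace (ZMod 2) (F h) x

/-- Points of the projective space `PG(3, 2^h)`. -/
abbrev Pt3 (h : ℕ) := Projectivization (F h) (Fin 4 → F h)

/-- The quadratic cone `K : X1X3 = X2²` with vertex `(1,0,0,0)`. -/
def cone {h : ℕ} : Set (Pt3 h) :=
  {P | P.rep 1 * P.rep 3 = P.rep 2 ^ 2}

/-- The plane `aX0 + bX1 + cX2 + dX3 = 0` of `PG(3,q)`. -/
def planeSet {h : ℕ} (a b c d : F h) : Set (Pt3 h) :=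
  {P | a * P.rep 0 + b * P.rep 1 + c * P.rep 2 + d * P.rep 3 = 0}

/-- The conic `{(0,x1,x2,x3) : α²x1² + x1x3 + β²x3² + λ²x2² = 0}` lying in the
plane `X0 = 0` of `PG(3,q)`. -/
def planeConic {h : ℕ} (α β lam : F h) : Set (Pt3 h) :=
  {P | P.rep 0 = 0 ∧
    α ^ 2 * P.rep 1 ^ 2 + P.rep 1 * P.rep 3 + β ^ 2 * P.rep 3 ^ 2 +
      lam ^ 2 * P.rep 2 ^ 2 = 0}

/-!
A point of `K` on a conic plane `λX0 + αX1 + (λ+1)X2 + βX3 = 0` satisfies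
`αX1 + λ(X0+X2) + βX3 = X2`; squaring (additive in characteristic 2) and using `X1X3 = X2²`
shows that its image `(0, X1, X0+X2, X3)` under the projection from `(1,0,1,0)` lies on the
plane conic `α²X1² + X1X3 + β²X3² + λ²X2² = 0`. A common point of two conics on `K` would
therefore project to a common point of `C` and `C'`. For the singular plane `X0 + X2 = 0` the
image would be a zero of the binary form `α²X1² + X1X3 + β²X3²`, which is anisotropic because
`Tr(αβ) = 1` and `v² + v` has trace zero for every `v`.
-/

open FiniteField in
theorem Algebra.trace_pow_card (K L : Type*) [Field K] [Fintype K] [Field L] [Algebra K L]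
    [Algebra.IsAlgebraic K L] (x : L) :
    Algebra.trace K L (x ^ Fintype.card K) = Algebra.trace K L x :=
  Algebra.trace_eq_of_algEquiv (frobeniusAlgEquivOfAlgebraic K L) x

section

variable {K : Type*} [Field K]

def projVec (v : Fin 4 → K) : Fin 4 → K := ![0, v 1, v 0 + v 2, v 3]

theorem projVec_ne_zero {v : Fin 4 → K} (hcone : v 1 * v 3 = v 2 ^ 2) (hv : v ≠ 0) :
    projVec v ≠ 0 := by
  intro h0
  have h1 : v 1 = 0 := congrFun h0 1
  have h3 : v 3 = 0 := congrFun h0 3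
  have h2 : v 2 = 0 := pow_eq_zero_iff two_ne_zero |>.1 (by rw [← hcone, h1, zero_mul])
  have h02 : v 0 + v 2 = 0 := congrFun h0 2
  have h0' : v 0 = 0 := by rwa [h2, add_zero] at h02
  exact hv (funext fun i => by fin_cases i <;> assumption)

section CharTwo

variable [CharP K 2]

theorem exists_sq_add_self_eq_mul_of_binaryForm_eq_zero {a b x y : K} (hxy : x ≠ 0 ∨ y ≠ 0)
    (h : a * x ^ 2 + x * y + b * y ^ 2 = 0) : ∃ v, v ^ 2 + v = a * b := by
  by_cases hy : y = 0
  · subst hy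
    have ha : a = 0 := by
      simpa [hxy.resolve_right (not_not.2 rfl)] using h
    exact ⟨0, by simp [ha]⟩
  · refine ⟨a * x / y, ?_⟩
    field_simp
    linear_combination a * h - a * b * y ^ 2 * (CharTwo.two_eq_zero : (2 : K) = 0)

theorem conic_eq_of_cone_of_plane {lam α β x0 x1 x2 x3 : K} (hcone : x1 * x3 = x2 ^ 2)
    (hplane : lam * x0 + α * x1 + (lam + 1) * x2 + β * x3 = 0) :
    α ^ 2 * x1 ^ 2 + x1 * x3 + β ^ 2 * x3 ^ 2 + lam ^ 2 * (x0 + x2) ^ 2 = 0 := by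
  have hsum : α * x1 + lam * (x0 + x2) + β * x3 = x2 := by
    linear_combination hplane - x2 * (CharTwo.two_eq_zero : (2 : K) = 0)
  have hsq := congrArg (· ^ 2) hsum
  simp only [CharTwo.add_sq, mul_pow] at hsq
  linear_combination
    hsq + hcone + (lam ^ 2 * x0 * x2 + x2 ^ 2) * (CharTwo.two_eq_zero : (2 : K) = 0)

end CharTwo

end

section GaloisField

variable {h : ℕ}

theorem Tr_sq (x : F h) : Tr (x ^ 2) = Tr x := by
  simpa [Tr] using Algebra.trace_pow_card (ZMod 2) (F h) x

theorem Tr_sq_add_self (v : F h) : Tr (v ^ 2 + v) = 0 := by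
  rw [Tr, map_add, ← Tr, ← Tr, Tr_sq, CharTwo.add_self_eq_zero]

theorem eq_zero_of_binaryForm_eq_zero {α β x y : F h} (htr : Tr (α * β) = 1)
    (hxy : α ^ 2 * x ^ 2 + x * y + β ^ 2 * y ^ 2 = 0) : x = 0 ∧ y = 0 := by
  by_contra hne
  obtain ⟨v, hv⟩ := exists_sq_add_self_eq_mul_of_binaryForm_eq_zero (not_and_or.1 hne) hxy
  have : Tr (v ^ 2 + v) = 1 := by rw [hv, ← mul_pow, Tr_sq, htr]
  exact zero_ne_one ((Tr_sq_add_self v).symm.trans this)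

theorem conic_eq_of_mem_cone_of_mem_planeSet {α β lam : F h} {P : Pt3 h} (hc : P ∈ cone)
    (hp : P ∈ planeSet lam α (lam + 1) β) :
    α ^ 2 * P.rep 1 ^ 2 + P.rep 1 * P.rep 3 + β ^ 2 * P.rep 3 ^ 2 +
      lam ^ 2 * (P.rep 0 + P.rep 2) ^ 2 = 0 :=
  conic_eq_of_cone_of_plane hc hp

theorem mk_mem_planeConic {α β lam : F h} {w : Fin 4 → F h} (hw : w ≠ 0) (h0 : w 0 = 0)
    (hq : α ^ 2 * w 1 ^ 2 + w 1 * w 3 + β ^ 2 * w 3 ^ 2 + lam ^ 2 * w 2 ^ 2 = 0) :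
    mk (F h) w hw ∈ planeConic α β lam := by
  obtain ⟨a, ha⟩ := exists_smul_eq_mk_rep (F h) w hw
  simp only [planeConic, Set.mem_ofPred_eq, ← ha, Pi.smul_apply, Units.smul_def, smul_eq_mul]
  exact ⟨by rw [h0, mul_zero], by linear_combination (a : F h) ^ 2 * hq⟩

theorem mk_projVec_mem_planeConic {α β lam : F h} {P : Pt3 h} (hc : P ∈ cone)
    (hp : P ∈ planeSet lam α (lam + 1) β) :
    mk (F h) (projVec P.rep) (projVec_ne_zero hc P.rep_nonzero) ∈ planeConic α β lam :=
  mk_mem_planeConic _ rfl (conic_eq_of_mem_cone_of_mem_planeSet hc hp)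

theorem disjoint_cone_inter_planeSet_singular {α β lam : F h} (htr : Tr (α * β) = 1) :
    Disjoint (cone ∩ planeSet lam α (lam + 1) β) (cone ∩ planeSet 1 0 1 0) := by
  refine Set.disjoint_left.2 fun P ⟨hc, hp⟩ ⟨_, hs⟩ => ?_
  have hs : P.rep 0 + P.rep 2 = 0 := by simpa [planeSet] using hs
  have hq := conic_eq_of_mem_cone_of_mem_planeSet hc hp
  rw [hs] at hq
  obtain ⟨h1, h3⟩ := eq_zero_of_binaryForm_eq_zero (x := P.rep 1) (y := P.rep 3) htr
    (by linear_combination hq)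
  refine projVec_ne_zero hc P.rep_nonzero (funext fun i => ?_)
  fin_cases i <;> simp [projVec, h1, h3, hs]

end GaloisField

theorem stmt9_general (h : ℕ) (α β α' β' lam lam' : F h)
    (htr : Tr (α * β) = 1) (htr' : Tr (α' * β') = 1)
    (hdisj : Disjoint (planeConic α β lam) (planeConic α' β' lam')) :
    Disjoint (cone ∩ planeSet lam α (lam + 1) β)
      (cone ∩ planeSet lam' α' (lam' + 1) β') ∧
    Disjoint (cone ∩ planeSet lam α (lam + 1) β)
      (cone ∩ planeSet 1 0 1 0) ∧
    Disjoint (cone ∩ planeSet lam' α' (lam' + 1) β')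
      (cone ∩ planeSet 1 0 1 0) := by
  refine ⟨?_, disjoint_cone_inter_planeSet_singular htr,
    disjoint_cone_inter_planeSet_singular htr'⟩
  exact Set.disjoint_left.2 fun P ⟨hc, hp⟩ ⟨_, hp'⟩ =>
    Set.disjoint_left.1 hdisj (mk_projVec_mem_planeConic hc hp) (mk_projVec_mem_planeConic hc hp')

theorem stmt9 (h : ℕ) (hh : h ≠ 0) (α β α' β' lam lam' : F h)
    (hlam : lam ≠ 0) (hlam' : lam' ≠ 0)
    (htr : Tr (α * β) = 1) (htr' : Tr (α' * β') = 1)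
    (hdisj : Disjoint (planeConic α β lam) (planeConic α' β' lam')) :
    Disjoint (cone ∩ planeSet lam α (lam + 1) β)
      (cone ∩ planeSet lam' α' (lam' + 1) β') ∧
    Disjoint (cone ∩ planeSet lam α (lam + 1) β)
      (cone ∩ planeSet 1 0 1 0) ∧
    Disjoint (cone ∩ planeSet lam' α' (lam' + 1) β')
      (cone ∩ planeSet 1 0 1 0) :=
  stmt9_general h α β α' β' lam lam' htr htr' hdisj

end
end

section
/- Let λ_d, λ, ρ ∈ F* with λ ≠ λ_d, and set β = (λ_d + 1)/ρ + 1. Then the two point sets C_λ = {(x1,x2,x3) : x1² + x1x3 + x3² + λ²x2² = 0} and C = {(x1,x2,x3) : x1² + x1x3 + β²x3² + λ_d²x2² = 0} in PG(2,q) are disjoint if and only if Tr[1 + λ²(λ_d + 1)²/(ρ²(λ_d + λ)²)] = 1. -/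
/-!
In characteristic 2 the sum of the two quadratic forms is the square
`((λd + 1)/ρ · x3 + (λ + λd) · x2)²`, so the common points of the conics are the points of `C_λ`
on a line. On that line, `C_λ` becomes the Artin–Schreier equation
`u² + u = 1 + λ²(λd + 1)²/(ρ²(λd + λ)²)`. The `GF(2)`-linear map `u ↦ u² + u` has kernel `GF(2)`
and its image lies in the kernel of the trace (`Tr (u²) = Tr u`), so by counting dimensions the
equation is solvable iff the trace vanishes.
-/

open Projectivization

noncomputable section

/-- Points of the Desarguesian projective plane `PG(2, 2^h)`,
written as triples `(x1, x2, x3)`. -/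
abbrev Pt (h : ℕ) := Projectivization (F h) (Fin 3 → F h)

section ArtinSchreier

variable {L : Type*} [Field L] [Algebra (ZMod 2) L]

variable (L) in
def artinSchreier : L →ₗ[ZMod 2] L :=
  (FiniteField.frobeniusAlgHom (ZMod 2) L).toLinearMap + LinearMap.id

theorem artinSchreier_apply (u : L) : artinSchreier L u = u ^ 2 + u := by
  simp [artinSchreier]

theorem ker_artinSchreier :
    LinearMap.ker (artinSchreier L) = Submodule.span (ZMod 2) {1} := by
  have := charP_of_injective_algebraMap' (ZMod 2) (A := L) 2
  refine le_antisymm (fun x hx ↦ ?_) ((Submodule.span_singleton_le_iff_mem _ _).mpr ?_)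
  · rw [LinearMap.mem_ker, artinSchreier_apply] at hx
    rcases mul_eq_zero.mp (show x * (x + 1) = 0 by linear_combination hx) with h0 | h1
    · rw [h0]
      exact Submodule.zero_mem _
    · rw [CharTwo.add_eq_zero.mp h1]
      exact Submodule.mem_span_singleton_self 1
  · rw [LinearMap.mem_ker, artinSchreier_apply, one_pow, CharTwo.add_self_eq_zero]

variable [Finite L]

theorem trace_sq (x : L) : Algebra.trace (ZMod 2) L (x ^ 2) = Algebra.trace (ZMod 2) L x := by
  simpa [ZMod.card] using
    Algebra.trace_eq_of_algEquiv (FiniteField.frobeniusAlgEquivOfAlgebraic (ZMod 2) L) x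

theorem range_artinSchreier :
    LinearMap.range (artinSchreier L) = LinearMap.ker (Algebra.trace (ZMod 2) L) := by
  have := charP_of_injective_algebraMap' (ZMod 2) (A := L) 2
  refine Submodule.eq_of_le_of_finrank_eq ?_ ?_
  · rintro _ ⟨u, rfl⟩
    rw [LinearMap.mem_ker, artinSchreier_apply, map_add, trace_sq, CharTwo.add_self_eq_zero]
  · have hker : Module.finrank (ZMod 2) (LinearMap.ker (artinSchreier L)) = 1 := by
      rw [ker_artinSchreier]; exact finrank_span_singleton one_ne_zero
    have hrange : Module.finrank (ZMod 2) (LinearMap.range (Algebra.trace (ZMod 2) L)) = 1 := by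
      rw [LinearMap.range_eq_top.mpr (Algebra.trace_surjective (ZMod 2) L), finrank_top,
        Module.finrank_self]
    have := LinearMap.finrank_range_add_finrank_ker (artinSchreier L)
    have := LinearMap.finrank_range_add_finrank_ker (Algebra.trace (ZMod 2) L)
    omega

theorem exists_sq_add_eq_iff_trace_eq_zero (a : L) :
    (∃ u, u ^ 2 + u = a) ↔ Algebra.trace (ZMod 2) L a = 0 := by
  simpa [artinSchreier_apply] using SetLike.ext_iff.mp range_artinSchreier a

end ArtinSchreier

namespace Projectivization

variable {K V : Type*} [DivisionRing K] [AddCommGroup V] [Module K V]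

theorem apply_rep_mk_eq_zero_iff {f : V → K} {m : ℕ} (hf : ∀ (a : K) v, f (a • v) = a ^ m * f v)
    {v : V} (hv : v ≠ 0) : f (mk K v hv).rep = 0 ↔ f v = 0 := by
  obtain ⟨a, ha⟩ := exists_smul_eq_mk_rep K v hv
  rw [← ha, Units.smul_def, hf, mul_eq_zero, or_iff_right (pow_ne_zero m a.ne_zero)]

theorem disjoint_setOf_rep_iff {f g : V → K} {m n : ℕ}
    (hf : ∀ (a : K) v, f (a • v) = a ^ m * f v) (hg : ∀ (a : K) v, g (a • v) = a ^ n * g v) :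
    Disjoint {P : Projectivization K V | f P.rep = 0} {P | g P.rep = 0} ↔
      ¬ ∃ v, v ≠ 0 ∧ f v = 0 ∧ g v = 0 := by
  rw [Set.disjoint_left]
  constructor
  · rintro hd ⟨v, hv, hfv, hgv⟩
    exact hd ((apply_rep_mk_eq_zero_iff hf hv).mpr hfv) ((apply_rep_mk_eq_zero_iff hg hv).mpr hgv)
  · exact fun h P hfP hgP ↦ h ⟨P.rep, P.rep_nonzero, hfP, hgP⟩

end Projectivization

section Conic

variable {K : Type*}

def conicForm [CommRing K] (b c : K) (v : Fin 3 → K) : K :=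
  v 0 ^ 2 + v 0 * v 2 + b * v 2 ^ 2 + c * v 1 ^ 2

theorem conicForm_one [CommRing K] (c : K) (v : Fin 3 → K) :
    conicForm 1 c v = v 0 ^ 2 + v 0 * v 2 + v 2 ^ 2 + c * v 1 ^ 2 := by
  rw [conicForm, one_mul]

theorem conicForm_smul [CommRing K] (b c a : K) (v : Fin 3 → K) :
    conicForm b c (a • v) = a ^ 2 * conicForm b c v := by
  simp only [conicForm, Pi.smul_apply, smul_eq_mul]
  ring

variable [Field K]

theorem exists_conicForm_eq_zero_on_line_iff {b c α γ : K} (hγ : γ ≠ 0) :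
    (∃ v, v ≠ 0 ∧ conicForm b c v = 0 ∧ α * v 2 = γ * v 1) ↔
      ∃ u, u ^ 2 + u + (b + c * (α / γ) ^ 2) = 0 := by
  constructor
  · rintro ⟨v, hv, hQ, hline⟩
    have hv1 : v 1 = α / γ * v 2 := by field_simp; linear_combination -hline
    generalize α / γ = r at hv1 ⊢
    have hv2 : v 2 ≠ 0 := by
      intro hv2
      have hv0 : v 0 = 0 := by
        simpa [conicForm, hv2, hv1] using hQ
      exact hv (by ext i; fin_cases i <;> simp [hv0, hv1, hv2])
    refine ⟨v 0 / v 2, ?_⟩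
    rw [conicForm, hv1] at hQ
    field_simp
    linear_combination hQ
  · rintro ⟨u, hu⟩
    refine ⟨![γ * u, α, γ], fun h ↦ hγ (by simpa using congrFun h 2), ?_, by simp [mul_comm]⟩
    simp only [conicForm, Matrix.cons_val_zero, Matrix.cons_val_one, Matrix.cons_val_two,
      Matrix.head_cons, Matrix.tail_cons]
    field_simp at hu
    linear_combination hu

variable [CharP K 2]

theorem conicForm_eq_zero_and_eq_zero_iff {b c b' c' α γ : K} (hb : b + b' = α ^ 2)
    (hc : c + c' = γ ^ 2) (v : Fin 3 → K) :
    conicForm b c v = 0 ∧ conicForm b' c' v = 0 ↔ conicForm b c v = 0 ∧ α * v 2 = γ * v 1 := by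
  have hsum : conicForm b c v + conicForm b' c' v = (α * v 2 + γ * v 1) ^ 2 := by
    rw [CharTwo.add_sq, conicForm, conicForm, mul_pow, mul_pow, ← hb, ← hc]
    linear_combination (v 0 ^ 2 + v 0 * v 2) * CharTwo.two_eq_zero (R := K)
  have hline : α * v 2 = γ * v 1 ↔ conicForm b c v + conicForm b' c' v = 0 := by
    rw [hsum, pow_eq_zero_iff two_ne_zero, CharTwo.add_eq_zero]
  rw [hline]
  constructor
  · rintro ⟨h1, h2⟩; exact ⟨h1, by rw [h1, h2, add_zero]⟩
  · rintro ⟨h1, h2⟩; exact ⟨h1, by rwa [h1, zero_add] at h2⟩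

end Conic

theorem stmt16_general (h : ℕ) (lamd lam ρ : F h) (hρ : ρ ≠ 0) (hne : lam ≠ lamd) :
    Disjoint
      {P : Pt h | P.rep 0 ^ 2 + P.rep 0 * P.rep 2 + P.rep 2 ^ 2 +
        lam ^ 2 * P.rep 1 ^ 2 = 0}
      {P : Pt h | P.rep 0 ^ 2 + P.rep 0 * P.rep 2 +
        ((lamd + 1) / ρ + 1) ^ 2 * P.rep 2 ^ 2 + lamd ^ 2 * P.rep 1 ^ 2 = 0} ↔
    Tr (1 + lam ^ 2 * (lamd + 1) ^ 2 / (ρ ^ 2 * (lamd + lam) ^ 2)) = 1 := by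
  have hb : 1 + ((lamd + 1) / ρ + 1) ^ 2 = ((lamd + 1) / ρ) ^ 2 := by
    linear_combination (1 + (lamd + 1) / ρ) * (CharTwo.two_eq_zero : (2 : F h) = 0)
  have hc : lam ^ 2 + lamd ^ 2 = (lam + lamd) ^ 2 := (CharTwo.add_sq _ _).symm
  have hγ : lam + lamd ≠ 0 := fun h0 ↦ hne (CharTwo.add_eq_zero.mp h0)
  have harg : 1 + lam ^ 2 * ((lamd + 1) / ρ / (lam + lamd)) ^ 2 =
      1 + lam ^ 2 * (lamd + 1) ^ 2 / (ρ ^ 2 * (lamd + lam) ^ 2) := by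
    rw [add_comm lam lamd]; field_simp
  simp only [← conicForm_one]
  refine (Projectivization.disjoint_setOf_rep_iff
    (g := conicForm (((lamd + 1) / ρ + 1) ^ 2) (lamd ^ 2)) (conicForm_smul _ _)
      (conicForm_smul _ _)).trans ?_
  simp_rw [conicForm_eq_zero_and_eq_zero_iff hb hc]
  rw [exists_conicForm_eq_zero_on_line_iff hγ]
  simp_rw [CharTwo.add_eq_zero]
  rw [harg, exists_sq_add_eq_iff_trace_eq_zero]
  exact ⟨Fin.eq_one_of_ne_zero _, ne_zero_of_eq_one⟩

theorem stmt16 (h : ℕ) (hh : h ≠ 0) (lamd lam ρ : F h)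
    (hlamd : lamd ≠ 0) (hlam : lam ≠ 0) (hρ : ρ ≠ 0) (hne : lam ≠ lamd) :
    Disjoint
      {P : Pt h | P.rep 0 ^ 2 + P.rep 0 * P.rep 2 + P.rep 2 ^ 2 +
        lam ^ 2 * P.rep 1 ^ 2 = 0}
      {P : Pt h | P.rep 0 ^ 2 + P.rep 0 * P.rep 2 +
        ((lamd + 1) / ρ + 1) ^ 2 * P.rep 2 ^ 2 + lamd ^ 2 * P.rep 1 ^ 2 = 0} ↔
    Tr (1 + lam ^ 2 * (lamd + 1) ^ 2 / (ρ ^ 2 * (lamd + lam) ^ 2)) = 1 :=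
  stmt16_general h lamd lam ρ hρ hne
end
end
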